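/- Let ξ₁, ξ₂, … be {-1,1}-valued random variables on a probability space with filtration F_k = σ(ξ₁,…,ξ_k), and let S_k = s exp(σ n^{-1/2} Σ_{i=1}^k ξ_i). Suppose Q is a probability measure such that E_Q[S_{k+1} - S_k | F_{(k-H)⁺}] = 0 for all 0 ≤ k ≤ n-1. Then for every H ≤ k ≤ n-1, |E_Q[ξ_{k+1} | F_{k-H}]| ≤ C/√n for some constant C depending only on σ and H. -/

import Mathlib

/-! With `a = σ / √n` and `R = exp (a (ξ_{k-H+1} + ⋯ + ξ_k)) ∈ [e^{-aH}, e^{aH}]`, the increment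
factors as `S_{k+1} - S_k = S_{k-H} R (e^{a ξ_{k+1}} - 1)`. Since `S_{k-H} > 0` is
`F_{k-H}`-measurable and `e^{a ξ} - 1 = (cosh a - 1) + ξ sinh a` for `ξ = ±1`, the delayed
martingale condition becomes `(cosh a - 1) E[R | F_{k-H}] + sinh a E[R ξ_{k+1} | F_{k-H}] = 0`,
whence `|E[R ξ_{k+1} | F_{k-H}]| ≤ a e^{aH}` as `cosh a - 1 ≤ a sinh a`. The remainder
`E[(1 - R) ξ_{k+1} | F_{k-H}]` is at most `e^{aH} - 1 ≤ aH e^{aH}` in absolute value. -/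

open MeasureTheory Finset Real

namespace Real

theorem cosh_sub_one_le_mul_sinh (a : ℝ) : cosh a - 1 ≤ a * sinh a := by
  have h₁ : exp a * (1 - a) ≤ 1 := by
    calc exp a * (1 - a) ≤ exp a * exp (-a) := by gcongr; linarith [add_one_le_exp (-a)]
      _ = 1 := by rw [← exp_add, add_neg_cancel, exp_zero]
  have h₂ : exp (-a) * (1 + a) ≤ 1 := by
    calc exp (-a) * (1 + a) ≤ exp (-a) * exp a := by gcongr; linarith [add_one_le_exp a]
      _ = 1 := by rw [← exp_add, neg_add_cancel, exp_zero]
  rw [cosh_eq, sinh_eq]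
  linarith

theorem abs_exp_sub_one_le_mul_exp {x b : ℝ} (h : |x| ≤ b) : |exp x - 1| ≤ b * exp b := by
  have hb : 0 ≤ b := (abs_nonneg x).trans h
  obtain ⟨hxl, hxu⟩ := abs_le.mp h
  have hexp : exp b * (1 - b) ≤ 1 := by
    calc exp b * (1 - b) ≤ exp b * exp (-b) := by gcongr; linarith [add_one_le_exp (-b)]
      _ = 1 := by rw [← exp_add, add_neg_cancel, exp_zero]
  refine abs_le.mpr ⟨?_, ?_⟩
  · nlinarith [add_one_le_exp x, one_le_exp hb]
  · linarith [exp_le_exp.mpr hxu]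

theorem exp_mul_sub_one_of_sign {a x : ℝ} (hx : x = 1 ∨ x = -1) :
    exp (a * x) - 1 = (cosh a - 1) + sinh a * x := by
  rcases hx with rfl | rfl
  · rw [mul_one, ← cosh_add_sinh]; ring
  · rw [mul_neg_one, ← cosh_sub_sinh]; ring

end Real

theorem Finset.abs_mul_sum_le_mul_card {ι : Type*} (a : ℝ) (t : Finset ι) {x : ι → ℝ}
    (hx : ∀ i, |x i| ≤ 1) : |a * ∑ i ∈ t, x i| ≤ |a| * #t := by
  rw [abs_mul]
  gcongr
  exact (abs_sum_le_sum_abs _ _).trans (by simpa using sum_le_card_nsmul t _ 1 fun i _ => hx i)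

theorem exp_sum_Icc_succ_sub {j k : ℕ} (hjk : j ≤ k) (s a : ℝ) (x : ℕ → ℝ) :
    s * exp (a * ∑ i ∈ Icc 1 (k + 1), x i) - s * exp (a * ∑ i ∈ Icc 1 k, x i)
      = s * exp (a * ∑ i ∈ Icc 1 j, x i)
        * (exp (a * ∑ i ∈ Icc (j + 1) k, x i) * (exp (a * x (k + 1)) - 1)) := by
  have hsplit := sum_Ioc_consecutive x (Nat.zero_le j) hjk
  rw [← Icc_add_one_left_eq_Ioc, ← Icc_add_one_left_eq_Ioc, ← Icc_add_one_left_eq_Ioc,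
    zero_add] at hsplit
  rw [sum_Icc_succ_top (by omega), ← hsplit, mul_add, mul_add, exp_add, exp_add]
  ring

section CondExp

variable {Ω : Type*} {m mΩ : MeasurableSpace Ω} {μ : Measure Ω} [IsFiniteMeasure μ]

theorem condExp_eq_zero_of_mul_left (hm : m ≤ mΩ) {f g : Ω → ℝ} {c : ℝ}
    (hf : StronglyMeasurable[m] f) (hfc : ∀ᵐ ω ∂μ, ‖f ω‖ ≤ c) (hf₀ : ∀ᵐ ω ∂μ, f ω ≠ 0)
    (hfg : μ[f * g | m] =ᵐ[μ] 0) : μ[g | m] =ᵐ[μ] 0 := by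
  by_cases hg : Integrable g μ
  swap
  · rw [condExp_of_not_integrable hg]
  filter_upwards [hfg, condExp_stronglyMeasurable_mul_of_bound hm hf hg c hfc, hf₀]
    with ω h₀ hpull hfω
  exact (mul_eq_zero.mp (hpull.symm.trans h₀)).resolve_left hfω

variable {a b : ℝ} {Y ξ : Ω → ℝ}

theorem abs_condExp_exp_mul_sign_le (ha : 0 < a) (hY : Measurable Y) (hYb : ∀ ω, |Y ω| ≤ b)
    (hξ : Measurable ξ) (hξ₁ : ∀ ω, ξ ω = 1 ∨ ξ ω = -1)
    (hcent : μ[fun ω => exp (Y ω) * (exp (a * ξ ω) - 1) | m] =ᵐ[μ] 0) :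
    ∀ᵐ ω ∂μ, |μ[fun ω => exp (Y ω) * ξ ω | m] ω| ≤ a * exp b := by
  have hRb : ∀ ω, |exp (Y ω)| ≤ exp b := fun ω => by
    rw [abs_exp]; exact exp_le_exp.mpr (le_abs_self _ |>.trans (hYb ω))
  have hRξb : ∀ ω, |exp (Y ω) * ξ ω| ≤ exp b := fun ω => by
    rcases hξ₁ ω with h | h <;> simpa [h] using hRb ω
  have hR : Integrable (fun ω => exp (Y ω)) μ :=
    .of_bound hY.exp.aestronglyMeasurable _ (.of_forall hRb)
  have hRξ : Integrable (fun ω => exp (Y ω) * ξ ω) μ :=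
    .of_bound (hY.exp.mul hξ).aestronglyMeasurable _ (.of_forall hRξb)
  have hlin : (fun ω => exp (Y ω) * (exp (a * ξ ω) - 1))
      = (cosh a - 1) • (fun ω => exp (Y ω)) + sinh a • fun ω => exp (Y ω) * ξ ω := by
    ext ω
    simp only [Pi.add_apply, Pi.smul_apply, smul_eq_mul, exp_mul_sub_one_of_sign (hξ₁ ω)]
    ring
  have hsplit := (condExp_add (hR.smul (cosh a - 1)) (hRξ.smul (sinh a)) m).trans
    ((condExp_smul (μ := μ) _ _ m).add (condExp_smul (μ := μ) _ _ m))
  rw [← hlin] at hsplit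
  filter_upwards [hcent, hsplit, ae_bdd_abs_condExp_of_ae_bdd_abs (m := m) (.of_forall hRb)]
    with ω h₀ hω hr
  simp only [h₀, Pi.add_apply, Pi.smul_apply, smul_eq_mul, Pi.zero_apply] at hω
  have hsinh : 0 < sinh a := sinh_pos_iff.mpr ha
  have hcosh : 0 ≤ cosh a - 1 := sub_nonneg.mpr (one_le_cosh a)
  refine le_of_mul_le_mul_left ?_ hsinh
  calc sinh a * |μ[fun ω => exp (Y ω) * ξ ω | m] ω|
      = (cosh a - 1) * |μ[fun ω => exp (Y ω) | m] ω| := by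
        rw [← abs_of_pos hsinh, ← abs_mul, ← abs_of_nonneg hcosh, ← abs_mul,
          eq_neg_of_add_eq_zero_right hω.symm, abs_neg]
    _ ≤ a * sinh a * exp b := by gcongr; exact cosh_sub_one_le_mul_sinh a
    _ = sinh a * (a * exp b) := by ring

theorem abs_condExp_sign_le_of_centered (ha : 0 < a) (hY : Measurable Y) (hYb : ∀ ω, |Y ω| ≤ b)
    (hξ : Measurable ξ) (hξ₁ : ∀ ω, ξ ω = 1 ∨ ξ ω = -1)
    (hcent : μ[fun ω => exp (Y ω) * (exp (a * ξ ω) - 1) | m] =ᵐ[μ] 0) :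
    ∀ᵐ ω ∂μ, |μ[ξ | m] ω| ≤ (a + b) * exp b := by
  have habsξ : ∀ ω, |ξ ω| = 1 := fun ω => by rcases hξ₁ ω with h | h <;> simp [h]
  have hDb : ∀ ω, |(1 - exp (Y ω)) * ξ ω| ≤ b * exp b := fun ω => by
    rw [abs_mul, habsξ, mul_one, abs_sub_comm]; exact abs_exp_sub_one_le_mul_exp (hYb ω)
  have hRξb : ∀ ω, |exp (Y ω) * ξ ω| ≤ exp b := fun ω => by
    rw [abs_mul, habsξ, mul_one, abs_exp]; exact exp_le_exp.mpr (le_abs_self _ |>.trans (hYb ω))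
  have hD : Integrable (fun ω => (1 - exp (Y ω)) * ξ ω) μ :=
    .of_bound ((measurable_const.sub hY.exp).mul hξ).aestronglyMeasurable _ (.of_forall hDb)
  have hRξ : Integrable (fun ω => exp (Y ω) * ξ ω) μ :=
    .of_bound (hY.exp.mul hξ).aestronglyMeasurable _ (.of_forall hRξb)
  have hsplit := condExp_add hD hRξ m
  have hdecomp : (fun ω => (1 - exp (Y ω)) * ξ ω) + (fun ω => exp (Y ω) * ξ ω) = ξ := by
    ext ω; simp only [Pi.add_apply]; ring
  rw [hdecomp] at hsplit
  filter_upwards [hsplit, ae_bdd_abs_condExp_of_ae_bdd_abs (m := m) (.of_forall hDb),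
    abs_condExp_exp_mul_sign_le ha hY hYb hξ hξ₁ hcent] with ω hω hd hq
  rw [hω, Pi.add_apply]
  linarith [abs_add_le (μ[fun ω => (1 - exp (Y ω)) * ξ ω | m] ω)
    (μ[fun ω => exp (Y ω) * ξ ω | m] ω)]

end CondExp

section BinomialModel

variable {Ω : Type*} {mΩ : MeasurableSpace Ω} {Q : Measure Ω} [IsFiniteMeasure Q]
  {F : ℕ → MeasurableSpace Ω} {ξ : ℕ → Ω → ℝ} {j k : ℕ} {a s : ℝ}

theorem condExp_exp_sum_mul_exp_sub_one_eq_zero (hF : Monotone F) (hFj : F j ≤ mΩ)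
    (hξm : ∀ i, Measurable[F i] (ξ i)) (hξ : ∀ i ω, |ξ i ω| ≤ 1) (hs : 0 < s) (hjk : j ≤ k)
    (hmart : Q[fun ω => s * exp (a * ∑ i ∈ Icc 1 (k + 1), ξ i ω)
      - s * exp (a * ∑ i ∈ Icc 1 k, ξ i ω) | F j] =ᵐ[Q] 0) :
    Q[fun ω => exp (a * ∑ i ∈ Icc (j + 1) k, ξ i ω) * (exp (a * ξ (k + 1) ω) - 1) | F j]
      =ᵐ[Q] 0 := by
  simp_rw [exp_sum_Icc_succ_sub hjk] at hmart
  refine condExp_eq_zero_of_mul_left hFj (f := fun ω => s * exp (a * ∑ i ∈ Icc 1 j, ξ i ω))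
    (c := s * exp (|a| * #(Icc 1 j))) ?_ (.of_forall fun ω => ?_)
    (.of_forall fun ω => mul_ne_zero hs.ne' (exp_pos _).ne') hmart
  · exact ((Finset.measurable_sum _ fun i hi => (hξm i).mono (hF (mem_Icc.mp hi).2) le_rfl
      ).const_mul a |>.exp.const_mul s).stronglyMeasurable
  · rw [norm_mul, norm_of_nonneg hs.le, norm_of_nonneg (exp_pos _).le]
    exact mul_le_mul_of_nonneg_left
      (exp_le_exp.mpr ((le_abs_self _).trans (abs_mul_sum_le_mul_card a _ (hξ · ω)))) hs.le

end BinomialModel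

/-- in the `n`-step binomial model with delay `H`, if `Q` satisfies the
delayed martingale condition `E_Q[S_{k+1} - S_k | F_{(k-H)⁺}] = 0`, then
`|E_Q[ξ_{k+1} | F_{k-H}]| ≤ C/√n` for `H ≤ k ≤ n-1`, with `C` depending only on `σ, H`. -/
theorem delayed_martingale_centering (σ : ℝ) (hσ : 0 < σ) (H : ℕ) :
    ∃ C : ℝ, 0 < C ∧
      ∀ (Ω : Type) (mΩ : MeasurableSpace Ω) (Q : Measure Ω), IsProbabilityMeasure Q →
      ∀ (n : ℕ), σ ^ 2 ≤ (n : ℝ) →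
      ∀ (s : ℝ), 0 < s →
      ∀ (F : ℕ → MeasurableSpace Ω) (ξ : ℕ → Ω → ℝ),
        Monotone F → (∀ k, F k ≤ mΩ) →
        (∀ i, Measurable[F i] (ξ i)) →
        (∀ i ω, ξ i ω = 1 ∨ ξ i ω = -1) →
        (∀ k, k < n →
          Q[(fun ω => s * Real.exp (σ / Real.sqrt n * ∑ i ∈ Finset.Icc 1 (k + 1), ξ i ω)
              - s * Real.exp (σ / Real.sqrt n * ∑ i ∈ Finset.Icc 1 k, ξ i ω)) | F (k - H)]
            =ᵐ[Q] 0) →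
        ∀ k, H ≤ k → k + 1 ≤ n →
          ∀ᵐ ω ∂Q, |(Q[ξ (k + 1) | F (k - H)]) ω| ≤ C / Real.sqrt n := by
  refine ⟨σ * (H + 1) * exp H, by positivity, ?_⟩
  intro Ω mΩ Q _ n hn s hs F ξ hF hFm hξm hξ hmart k _ hkn
  have hsqrt : 0 < √n := sqrt_pos.mpr (lt_of_lt_of_le (by positivity) hn)
  set a := σ / √n with ha_def
  have ha : 0 < a := div_pos hσ hsqrt
  have ha₁ : a ≤ 1 := (div_le_one hsqrt).mpr ((le_sqrt hσ.le n.cast_nonneg).mpr hn)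
  have hξ₁ : ∀ i ω, |ξ i ω| ≤ 1 := fun i ω => by rcases hξ i ω with h | h <;> simp [h]
  have hY : Measurable fun ω => a * ∑ i ∈ Icc (k - H + 1) k, ξ i ω :=
    (Finset.measurable_sum _ fun i _ => (hξm i).mono (hFm i) le_rfl).const_mul a
  have hYb (ω : Ω) : |a * ∑ i ∈ Icc (k - H + 1) k, ξ i ω| ≤ a * H := by
    refine (abs_mul_sum_le_mul_card a _ (hξ₁ · ω)).trans ?_
    rw [abs_of_pos ha, Nat.card_Icc]
    gcongr
    exact_mod_cast (by omega : k + 1 - (k - H + 1) ≤ H)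
  have hcent := condExp_exp_sum_mul_exp_sub_one_eq_zero hF (hFm _) hξm hξ₁ hs (Nat.sub_le k H)
    (hmart k (by omega))
  filter_upwards [abs_condExp_sign_le_of_centered ha hY hYb ((hξm _).mono (hFm _) le_rfl) (hξ _)
    hcent] with ω hω
  calc _ ≤ (a + a * H) * exp (a * H) := hω
    _ ≤ a * (H + 1) * exp H := by
      rw [← mul_one_add, add_comm 1]; gcongr; exact mul_le_of_le_one_left (by positivity) ha₁
    _ = σ * (H + 1) * exp H / √n := by rw [ha_def]; ring
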